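/- arXiv:2009.05374 — 2 statements merged into one kernel-verified Lean document; each statement's English description precedes it below -/
import Mathlib

section
/- Let {x,z} = {q,−1}, let (R^q_{u,w}) and (R^{−1}_{u,w}) be the two families of Kazhdan–Lusztig R-polynomials of a pircon system (P,S), both satisfying the up-down symmetry, and let (P^x_{u,w}) be the Kazhdan–Lusztig–Stanley polynomials of (R^x_{u,w}). Then ι^x(C^x_w) = C^x_w for every w ∈ P. -/
open Polynomial LaurentPolynomial

noncomputable section

/-- A quasi special partial matching of a poset `P`: an involution `M : P → P` such that
for every `t`, either `M t ⋖ t`, `M t = t`, or `t ⋖ M t`, and whenever `t ⋖ u` and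
`M t ≠ u`, then `M t < M u`. -/
def IsQSPM {P : Type*} [PartialOrder P] (M : P → P) : Prop :=
  Function.Involutive M ∧
  (∀ t : P, M t ⋖ t ∨ M t = t ∨ t ⋖ M t) ∧
  ∀ t u : P, t ⋖ u → M t ≠ u → M t < M u

/-- A quasi special partial matching of the order ideal `P_{≤w}`. -/
def IsQSPMOn {P : Type*} [PartialOrder P] (w : P) (M : P → P) : Prop :=
  (∀ u : P, u ≤ w → M u ≤ w) ∧
  (∀ u : P, u ≤ w → M (M u) = u) ∧
  (∀ u : P, u ≤ w → M u ⋖ u ∨ M u = u ∨ u ⋖ M u) ∧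
  ∀ u t : P, u ≤ w → t ≤ w → u ⋖ t → M u ≠ t → M u < M t

/-- A special partial matching of the order ideal `P_{≤w}` (whose maximum is `w`). -/
def IsSPMOn {P : Type*} [PartialOrder P] (w : P) (M : P → P) : Prop :=
  IsQSPMOn w M ∧ M w ⋖ w

/-- A pircon: for every non-minimal `x`, the order ideal `P_{≤x}` is finite and admits
a special partial matching. -/
def IsPircon (P : Type*) [PartialOrder P] : Prop :=
  ∀ x : P, ¬ IsMin x → (Set.Iic x).Finite ∧ ∃ M : P → P, IsSPMOn x M

/-- A pircon system `(P,S)`: `S` is a set of quasi special partial matchings of `P` such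
that every `w ≠ ⊥` is matched downwards by some `M ∈ S`. -/
def IsPirconSystem {P : Type*} [PartialOrder P] [OrderBot P] (S : Set (P → P)) : Prop :=
  (∀ M ∈ S, IsQSPM M) ∧ ∀ w : P, w ≠ ⊥ → ∃ M ∈ S, M w ⋖ w

/-- The defining properties of the family of Kazhdan--Lusztig `R^x`-polynomials of a
pircon system `(P,S)`, where `x ∈ {q,-1} ⊆ ℤ[q]` (here `q` is the variable `X`). -/
def IsKLRFamily {P : Type*} [PartialOrder P] (S : Set (P → P)) (x : Polynomial ℤ)
    (R : P → P → Polynomial ℤ) : Prop :=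
  (∀ u w : P, ¬ u ≤ w → R u w = 0) ∧
  (∀ w : P, R w w = 1) ∧
  ∀ M ∈ S, ∀ u w : P, M w ⋖ w →
    (M u ⋖ u → R u w = R (M u) (M w)) ∧
    (u ⋖ M u → R u w = (X - 1) * R u (M w) + X * R (M u) (M w)) ∧
    (M u = u → R u w = (X - 1 - x) * R u (M w))

/-- The up-down symmetry for a family of Kazhdan--Lusztig `R^x`-polynomials. -/
def UpDownSymmetry {P : Type*} [PartialOrder P] (S : Set (P → P)) (x : Polynomial ℤ)
    (R : P → P → Polynomial ℤ) : Prop :=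
  ∀ M ∈ S, ∀ u w : P, u ⋖ M u →
    (w ⋖ M w → R u w = R (M u) (M w)) ∧
    (M w ⋖ w → R u w = (X - 1) * R (M u) w + X * R (M u) (M w)) ∧
    (M w = w → R u w = (X - 1 - x) * R (M u) w)

/-!  The ring `A = ℤ[q^{1/2}, q^{-1/2}]` is realized as `LaurentPolynomial ℤ`, with
`q^{1/2} = T 1` and hence `q = T 2`; the bar involution `q^{1/2} ↦ q^{-1/2}` is
`LaurentPolynomial.invert`.  The free `A`-module `𝓜_P = ⊕_{u ∈ P} A·m_u` is realized as
the finitely supported elements of `P → A`, the basis element `m_u` corresponding to the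
indicator of `u`. -/

/-- Evaluation of a polynomial in `q` at `q = T 2`, i.e. the inclusion
`ℤ[q] → ℤ[q^{1/2}, q^{-1/2}]`. -/
def evq (p : Polynomial ℤ) : LaurentPolynomial ℤ :=
  Polynomial.aeval (T 2 : LaurentPolynomial ℤ) p

open Classical in
/-- The `y`-action of the operator `T_M` on `𝓜_P`, written in coordinates:
`T_M(m_v) = m_{M v}` if `v ⋖ M v`; `T_M(m_v) = q·m_{M v} + (q-1)·m_v` if `M v ⋖ v`;
and `T_M(m_v) = y·m_v` if `M v = v`. -/
def TMact {P : Type*} [PartialOrder P] (M : P → P) (y : LaurentPolynomial ℤ)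
    (f : P → LaurentPolynomial ℤ) : P → LaurentPolynomial ℤ := fun u =>
  if M u = u then y * f u
  else if M u < u then f (M u) + (T 2 - 1) * f u
  else T 2 * f (M u)

/-- The map `ι^x` on `𝓜_P`, written in coordinates:
`ι^x(Σ_v f_v·m_v) = Σ_v f̄_v·q^{-ρ(v)}·Σ_{u} (-1)^{ρ(u,v)}·R^x_{u,v}(q)·m_u`. -/
def iotaAct {P : Type*} [PartialOrder P] (ρ : P → ℕ) (R : P → P → Polynomial ℤ)
    (f : P → LaurentPolynomial ℤ) : P → LaurentPolynomial ℤ := fun u =>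
  ∑ᶠ v : P, invert (f v) * (T (-2 * (ρ v : ℤ)) * ((-1) ^ (ρ v - ρ u) * evq (R u v)))

/-- The involution `j_P` of `𝓜_P`: `j_P(a·m_w) = ā·(-q^{-1})^{ρ(w)}·m_w`. -/
def jPact {P : Type*} [PartialOrder P] (ρ : P → ℕ) (f : P → LaurentPolynomial ℤ) :
    P → LaurentPolynomial ℤ := fun w => invert (f w) * (-T (-2)) ^ (ρ w)

/-- `deg f < k/2`. -/
def DegLtHalf (f : Polynomial ℤ) (k : ℤ) : Prop :=
  f = 0 ∨ 2 * (f.natDegree : ℤ) < k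

/-- The Kazhdan--Lusztig--Stanley polynomials of the kernel `(R_{u,w})`: `P_{u,w} = 0`
unless `u ≤ w`, `P_{w,w} = 1`, `deg P_{u,w} < ρ(u,w)/2` for `u < w`, and
`q^{ρ(u,w)}·P_{u,w}(q⁻¹) = Σ_{u ≤ t ≤ w} R_{u,t}(q)·P_{t,w}(q)`. -/
def IsKLSFamily {P : Type*} [PartialOrder P] (ρ : P → ℕ)
    (R Pp : P → P → Polynomial ℤ) : Prop :=
  (∀ u w : P, ¬ u ≤ w → Pp u w = 0) ∧
  (∀ w : P, Pp w w = 1) ∧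
  (∀ u w : P, u < w → DegLtHalf (Pp u w) ((ρ w : ℤ) - (ρ u : ℤ))) ∧
  ∀ u w : P, u ≤ w →
    T (2 * ((ρ w : ℤ) - (ρ u : ℤ))) * invert (evq (Pp u w)) =
      ∑ᶠ t ∈ Set.Icc u w, evq (R u t) * evq (Pp t w)

/-- The Kazhdan--Lusztig element `C^x_w ∈ 𝓜_P`, in coordinates: its coefficient on `m_v`
is `q^{ρ(w)/2}·(-1)^{ρ(v,w)}·q^{-ρ(v)}·P^x_{v,w}(q^{-1})`. -/
def Cel {P : Type*} [PartialOrder P] (ρ : P → ℕ) (Pp : P → P → Polynomial ℤ) (w : P) :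
    P → LaurentPolynomial ℤ := fun v =>
  T (ρ w : ℤ) * ((-1) ^ (ρ w - ρ v) * (T (-2 * (ρ v : ℤ)) * invert (evq (Pp v w))))

/-- The Kazhdan--Lusztig element `C'^x_w ∈ 𝓜_P`, in coordinates: its coefficient on
`m_v` is `q^{-ρ(w)/2}·P^z_{v,w}(q)` (the family `Pp` fed here is `P^z`). -/
def Cel' {P : Type*} [PartialOrder P] (ρ : P → ℕ) (Pp : P → P → Polynomial ℤ) (w : P) :
    P → LaurentPolynomial ℤ := fun v =>
  T (-(ρ w : ℤ)) * evq (Pp v w)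

/-!
Expanding `ι^x(C^x_w)` at `m_u`, the bar involution turns `P^x_{v,w}(q⁻¹)` back into
`P^x_{v,w}(q)`, the powers `q^{±ρ(v)}` cancel, and the signs `(-1)^{ρ(v,w)}·(-1)^{ρ(u,v)}`
combine to `(-1)^{ρ(u,w)}` because `ρ` is monotone on the finite intervals of a pircon.
What remains is `q^{-ρ(w)/2}·(-1)^{ρ(u,w)}·Σ_{u ≤ v ≤ w} R^x_{u,v}(q)·P^x_{v,w}(q)`, and the
defining identity of the Kazhdan–Lusztig–Stanley polynomials turns this sum into
`q^{ρ(u,w)}·P^x_{u,w}(q⁻¹)`, which gives back the coefficient of `C^x_w` at `m_u`.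
-/

theorem finsum_eq_finsum_mem_of_support_subset {α M : Type*} [AddCommMonoid M] {f : α → M}
    {s : Set α} (h : Function.support f ⊆ s) : ∑ᶠ i, f i = ∑ᶠ i ∈ s, f i := by
  rw [finsum_mem_def, Set.indicator_eq_self.2 h]

section

variable {P : Type*} [PartialOrder P]

theorem IsPircon.finite_Icc (hP : IsPircon P) (u w : P) : (Set.Icc u w).Finite := by
  by_cases hw : IsMin w
  · exact (Set.finite_singleton w).subset fun t ht => hw.eq_of_le ht.2
  · exact (hP w hw).1.subset Set.Icc_subset_Iic_self

theorem monotone_of_covBy_imp_eq_succ [LocallyFiniteOrder P] {ρ : P → ℕ}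
    (hρcov : ∀ a b : P, a ⋖ b → ρ b = ρ a + 1) : Monotone ρ := by
  intro a b hab
  rw [le_iff_reflTransGen_covBy] at hab
  induction hab with
  | refl => exact le_rfl
  | tail _ hcov ih => exact ih.trans (hρcov _ _ hcov ▸ Nat.le_succ _)

theorem invert_Cel_apply (ρ : P → ℕ) (Pp : P → P → Polynomial ℤ) (w v : P) :
    invert (Cel ρ Pp w v) =
      T (-(ρ w : ℤ)) * ((-1) ^ (ρ w - ρ v) * (T (2 * (ρ v : ℤ)) * evq (Pp v w))) := by
  simp [Cel, involutive_invert _]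

theorem Cel_apply_eq_T_mul_KLS_lhs (ρ : P → ℕ) (Pp : P → P → Polynomial ℤ) (w u : P) :
    Cel ρ Pp w u = T (-(ρ w : ℤ)) * (-1) ^ (ρ w - ρ u) *
      (T (2 * ((ρ w : ℤ) - (ρ u : ℤ))) * invert (evq (Pp u w))) := by
  have hT : (T (ρ w : ℤ) : LaurentPolynomial ℤ) * T (-2 * (ρ u : ℤ)) =
      T (-(ρ w : ℤ)) * T (2 * ((ρ w : ℤ) - (ρ u : ℤ))) := by
    rw [← T_add, ← T_add]
    ring_nf
  rw [Cel]
  linear_combination (-1) ^ (ρ w - ρ u) * invert (evq (Pp u w)) * hT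

theorem iotaAct_Cel_apply {ρ : P → ℕ} (hρ : Monotone ρ) {R Pp : P → P → Polynomial ℤ}
    (hR : ∀ u v : P, ¬ u ≤ v → R u v = 0) (hPp : ∀ v w : P, ¬ v ≤ w → Pp v w = 0) (w u : P) :
    iotaAct ρ R (Cel ρ Pp w) u =
      T (-(ρ w : ℤ)) * (-1) ^ (ρ w - ρ u) * ∑ᶠ v ∈ Set.Icc u w, evq (R u v) * evq (Pp v w) := by
  unfold iotaAct
  rw [finsum_eq_finsum_mem_of_support_subset (s := Set.Icc u w), mul_finsum_mem]
  · refine finsum_mem_congr rfl fun v ⟨huv, hvw⟩ => ?_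
    have hsign : (-1 : LaurentPolynomial ℤ) ^ (ρ w - ρ v) * (-1) ^ (ρ v - ρ u) =
        (-1) ^ (ρ w - ρ u) := by
      have hρuv := hρ huv
      have hρvw := hρ hvw
      rw [← pow_add]
      congr 1
      omega
    have hT : (T (2 * (ρ v : ℤ)) : LaurentPolynomial ℤ) * T (-2 * (ρ v : ℤ)) = 1 := by
      rw [← T_add, ← T_zero]
      ring_nf
    rw [invert_Cel_apply]
    linear_combination T (-(ρ w : ℤ)) * evq (R u v) * evq (Pp v w) *
      ((-1) ^ (ρ w - ρ v) * (-1) ^ (ρ v - ρ u) * hT + hsign)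
  · intro v hv
    by_contra hIcc
    rw [Set.mem_Icc, not_and_or] at hIcc
    rcases hIcc with huv | hvw
    · simp [hR u v huv, evq] at hv
    · simp [Cel, hPp v w hvw, evq] at hv

end

theorem iota_Cel_general {P : Type*} [PartialOrder P]
    (ρ : P → ℕ) (hρcov : ∀ a b : P, a ⋖ b → ρ b = ρ a + 1)
    (hP : IsPircon P) {S : Set (P → P)}
    {x : Polynomial ℤ}
    {Rx : P → P → Polynomial ℤ}
    (hRx : IsKLRFamily S x Rx)
    {Px : P → P → Polynomial ℤ} (hPx : IsKLSFamily ρ Rx Px)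
    (w : P) :
    iotaAct ρ Rx (Cel ρ Px w) = Cel ρ Px w := by
  let _ : LocallyFiniteOrder P := LocallyFiniteOrder.ofFiniteIcc hP.finite_Icc
  funext u
  rw [iotaAct_Cel_apply (monotone_of_covBy_imp_eq_succ hρcov) hRx.1 hPx.1,
    Cel_apply_eq_T_mul_KLS_lhs]
  congr 1
  by_cases huw : u ≤ w
  · exact (hPx.2.2.2 u w huw).symm
  · rw [Set.Icc_eq_empty huw, finsum_mem_empty, hPx.1 u w huw]
    simp [evq]

/-- The Kazhdan--Lusztig element
`C^x_w = q^{ρ(w)/2}·Σ_{v ≤ w} (-1)^{ρ(v,w)}·q^{-ρ(v)}·P^x_{v,w}(q^{-1})·m_v` is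
invariant under `ι^x`. -/
theorem iota_Cel {P : Type*} [PartialOrder P] [OrderBot P]
    (ρ : P → ℕ) (hρ0 : ρ (⊥ : P) = 0) (hρcov : ∀ a b : P, a ⋖ b → ρ b = ρ a + 1)
    (hP : IsPircon P) {S : Set (P → P)} (hS : IsPirconSystem S)
    {x z : Polynomial ℤ} (hxz : (x = X ∧ z = -1) ∨ (x = -1 ∧ z = X))
    {Rx Rz : P → P → Polynomial ℤ}
    (hRx : IsKLRFamily S x Rx) (hRz : IsKLRFamily S z Rz)
    (hudx : UpDownSymmetry S x Rx) (hudz : UpDownSymmetry S z Rz)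
    {Px : P → P → Polynomial ℤ} (hPx : IsKLSFamily ρ Rx Px)
    (w : P) :
    iotaAct ρ Rx (Cel ρ Px w) = Cel ρ Px w :=
  iota_Cel_general ρ hρcov hP hRx hPx w

end
end

section
/- Characterization of the Kazhdan–Lusztig basis elements: Let {x,z} = {q,−1}, let (R^q_{u,w}) and (R^{−1}_{u,w}) be the two families of Kazhdan–Lusztig R-polynomials of a pircon system (P,S), both satisfying the up-down symmetry, and let (P^z_{u,w}) be the Kazhdan–Lusztig–Stanley polynomials of (R^z_{u,w}). Suppose D ∈ 𝓜_P and w ∈ P satisfy: (1) ι^x(D) = D; and (2) D = q^{−ρ(w)/2}·Σ_{v∈P} Q_{v,w}·m_v, where each Q_{v,w} ∈ ℤ[q], Q_{v,w} = 0 for all but finitely many v, Q_{w,w} = 1, and deg Q_{v,w} < ρ(v,w)/2 for every v ≠ w. Then Q_{v,w} = P^z_{v,w} for all v ∈ P; that is, D = C'^x_w. -/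
open Polynomial LaurentPolynomial

noncomputable section

/-!
Comparing the recursions for `R^x` and `R^z` along a matching `M` with `M(v) ⋖ v` shows, by
induction on `ρ(v)`, that `q^{ρ(u,v)}·R̄^x_{u,v} = (-1)^{ρ(u,v)}·R^z_{u,v}`. Through this
duality, `ι^x`-invariance of `D` becomes the system `q^{ρ(u,w)}·Q̄_u = Σ_v R^z_{u,v}·Q_v`,
which also defines the polynomials `P^z_{·,w}`. The difference `E = Q - P^z_{·,w}` solves it
and has `deg E_v < ρ(v,w)/2` for every `v`; at a maximal `v` of its support the system reads
`E_v = q^{ρ(v,w)}·Ē_v`, which forces `E_v = 0`.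
-/

open Function

@[simp] lemma evq_zero : evq 0 = 0 := by simp [evq]
@[simp] lemma evq_one : evq 1 = 1 := by simp [evq]
@[simp] lemma evq_X : evq X = T 2 := by simp [evq]
@[simp] lemma evq_neg (p : ℤ[X]) : evq (-p) = -evq p := by simp [evq]
@[simp] lemma evq_sub (p q : ℤ[X]) : evq (p - q) = evq p - evq q := by simp [evq]
@[simp] lemma evq_add (p q : ℤ[X]) : evq (p + q) = evq p + evq q := by simp [evq]
@[simp] lemma evq_mul (p q : ℤ[X]) : evq (p * q) = evq p * evq q := by simp [evq]

lemma coeff_evq (p : ℤ[X]) (n : ℕ) : (evq p).coeff (2 * (n : ℤ)) = p.coeff n := by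
  induction p using Polynomial.induction_on' with
  | add p q hp hq =>
      rw [evq_add, Polynomial.coeff_add, ← hp, ← hq, AddMonoidAlgebra.coeff_add]
      exact Finsupp.add_apply _ _ _
  | monomial m a =>
      have h1 : evq (Polynomial.monomial m a) = AddMonoidAlgebra.single ((m : ℤ) * 2) a := by
        unfold evq
        rw [Polynomial.aeval_monomial, T_pow, single_eq_C_mul_T]
        congr 1
      rw [h1, AddMonoidAlgebra.coeff_single, Polynomial.coeff_monomial, Finsupp.single_apply]
      by_cases h : m = n
      · subst h
        rw [if_pos (by ring), if_pos rfl]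
      · rw [if_neg (by omega), if_neg h]

lemma support_evq_mul_evq_subset {α : Type*} (f F : α → ℤ[X]) :
    support (fun v => evq (f v) * evq (F v)) ⊆ support F :=
  (support_mul_subset_right _ _).trans (support_comp_subset evq_zero F)

lemma DegLtHalf.sub {p p' : ℤ[X]} {k : ℤ} (hp : DegLtHalf p k) (hp' : DegLtHalf p' k) :
    DegLtHalf (p - p') k := by
  rcases hp with rfl | hp
  · rcases hp' with rfl | hp'
    · exact Or.inl (sub_zero 0)
    · exact Or.inr (by rwa [zero_sub, natDegree_neg])
  · right
    have := natDegree_sub_le p p'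
    rcases hp' with rfl | hp'
    · rwa [sub_zero]
    · omega

/-- A polynomial of degree `< k/2` cannot satisfy `F(q) = q^k F(q⁻¹)` unless it vanishes:
if `t` is its lowest exponent, the right side has a nonzero coefficient at `q^(k-t)`, beyond
the degree of `F`. -/
lemma DegLtHalf.eq_zero_of_evq_eq {p : ℤ[X]} {k : ℤ} (hdeg : DegLtHalf p k)
    (h : evq p = T (2 * k) * invert (evq p)) : p = 0 := by
  rcases hdeg with hp | hlt
  · exact hp
  by_contra hp
  set t := p.natTrailingDegree
  have ht : t ≤ p.natDegree := natTrailingDegree_le_natDegree p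
  obtain ⟨j, hj⟩ : ∃ j : ℕ, (j : ℤ) = k - t := ⟨(k - t).toNat, Int.toNat_of_nonneg (by omega)⟩
  have hlhs : (evq p).coeff (2 * (j : ℤ)) = 0 := by
    rw [coeff_evq]
    exact coeff_eq_zero_of_natDegree_lt (by omega)
  have hrhs : (T (2 * k) * invert (evq p)).coeff (2 * (j : ℤ)) = p.coeff t := by
    rw [show (T (2 * k) : LaurentPolynomial ℤ) = AddMonoidAlgebra.single (2 * k) 1 from rfl,
      AddMonoidAlgebra.coeff_single_mul_apply, one_mul, invert_apply,
      show -(-(2 * k) + 2 * (j : ℤ)) = 2 * (t : ℤ) by omega, coeff_evq]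
  exact coeff_natTrailingDegree_ne_zero.mpr hp (by rw [← hrhs, ← h, hlhs])

section Rank

variable {P : Type*} [PartialOrder P]

lemma IsPircon.finite_Iic (hP : IsPircon P) (v : P) : (Set.Iic v).Finite := by
  by_cases hv : IsMin v
  · simp [hv.Iic_eq]
  · exact (hP v hv).1

lemma IsPircon.rank_mono (hP : IsPircon P) {ρ : P → ℕ} (hρ : ∀ a b : P, a ⋖ b → ρ b = ρ a + 1)
    {u v : P} (huv : u ≤ v) : ρ u ≤ ρ v := by
  refine ((hP.finite_Iic v).wellFoundedOn (r := (· > ·))).induction (P := fun y => ρ y ≤ ρ v)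
    huv fun y hyv ih => ?_
  rcases (Set.mem_Iic.mp hyv).eq_or_lt with rfl | hlt
  · exact le_rfl
  obtain ⟨c, hc, hmin⟩ := ((hP.finite_Iic v).subset Set.Ioc_subset_Iic_self).exists_minimal
    ⟨v, hlt, le_rfl⟩
  have hyc : y ⋖ c := ⟨hc.1, fun d hyd hdc => hdc.not_ge (hmin ⟨hyd, hdc.le.trans hc.2⟩ hdc.le)⟩
  have := ih c hc.2 hc.1
  rw [hρ y c hyc] at this
  omega

end Rank

section Duality

variable {P : Type*} [PartialOrder P] {ρ : P → ℕ} {S : Set (P → P)} {x z : ℤ[X]}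
  {Rx Rz : P → P → ℤ[X]}

lemma T_two_mul_invert_evq_X_sub_one_sub (hxz : (x = X ∧ z = -1) ∨ (x = -1 ∧ z = X)) :
    T 2 * invert (evq (X - 1 - x)) = -evq (X - 1 - z) := by
  have hTT : (T 2 : LaurentPolynomial ℤ) * T (-2) = 1 := by rw [← T_add]; norm_num
  rcases hxz with ⟨rfl, rfl⟩ | ⟨rfl, rfl⟩ <;> simp [hTT]

lemma bar_duality_bot [OrderBot P] (hRx : IsKLRFamily S x Rx) (hRz : IsKLRFamily S z Rz)
    (u : P) :
    T (2 * ((ρ ⊥ : ℤ) - ρ u)) * invert (evq (Rx u ⊥)) = (-1) ^ (ρ ⊥ + ρ u) * evq (Rz u ⊥) := by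
  by_cases hu : u ≤ ⊥
  · rw [le_bot_iff.mp hu, hRx.2.1, hRz.2.1, ← two_mul, pow_mul]
    simp
  · simp [hRx.1 _ _ hu, hRz.1 _ _ hu]

lemma bar_duality_step (hρ : ∀ a b : P, a ⋖ b → ρ b = ρ a + 1) (hS : ∀ M ∈ S, IsQSPM M)
    (hxz : (x = X ∧ z = -1) ∨ (x = -1 ∧ z = X))
    (hRx : IsKLRFamily S x Rx) (hRz : IsKLRFamily S z Rz)
    {M : P → P} (hM : M ∈ S) {v : P} (hMv : M v ⋖ v)
    (ih : ∀ u, T (2 * ((ρ (M v) : ℤ) - ρ u)) * invert (evq (Rx u (M v))) =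
      (-1) ^ (ρ (M v) + ρ u) * evq (Rz u (M v))) (u : P) :
    T (2 * ((ρ v : ℤ) - ρ u)) * invert (evq (Rx u v)) = (-1) ^ (ρ v + ρ u) * evq (Rz u v) := by
  have hρv := hρ _ _ hMv
  have hTT : (T 2 : LaurentPolynomial ℤ) * T (-2) = 1 := by rw [← T_add]; norm_num
  rcases (hS M hM).2.1 u with hdown | hfix | hup
  · have hρu := hρ _ _ hdown
    rw [(hRx.2.2 M hM u v hMv).1 hdown, (hRz.2.2 M hM u v hMv).1 hdown,
      show 2 * ((ρ v : ℤ) - ρ u) = 2 * ((ρ (M v) : ℤ) - ρ (M u)) by omega, hρv, hρu]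
    linear_combination ih (M u)
  · rw [(hRx.2.2 M hM u v hMv).2.2 hfix, (hRz.2.2 M hM u v hMv).2.2 hfix,
      show 2 * ((ρ v : ℤ) - ρ u) = 2 + 2 * ((ρ (M v) : ℤ) - ρ u) by omega, T_add, hρv,
      evq_mul, evq_mul, map_mul]
    linear_combination (T (2 * ((ρ (M v) : ℤ) - ρ u)) * invert (evq (Rx u (M v)))) *
      T_two_mul_invert_evq_X_sub_one_sub hxz - evq (X - 1 - z) * ih u
  · have hρu := hρ _ _ hup
    have ihu := ih u
    have ihMu := ih (M u)
    rw [show 2 * ((ρ (M v) : ℤ) - ρ u) = 2 + 2 * ((ρ (M v) : ℤ) - ρ (M u)) by omega,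
      T_add] at ihu
    rw [(hRx.2.2 M hM u v hMv).2.1 hup, (hRz.2.2 M hM u v hMv).2.1 hup,
      show 2 * ((ρ v : ℤ) - ρ u) = 2 + (2 + 2 * ((ρ (M v) : ℤ) - ρ (M u))) by omega,
      T_add, T_add, hρv]
    simp only [evq_add, evq_mul, evq_sub, evq_X, evq_one, map_add, map_mul, map_sub, map_one,
      invert_T]
    set B := (T (2 * ((ρ (M v) : ℤ) - ρ (M u))) : LaurentPolynomial ℤ)
    rw [hρu] at ihMu
    linear_combination (T 2 * B * invert (evq (Rx u (M v))) +
      T 2 * B * invert (evq (Rx (M u) (M v)))) * hTT + (1 - T 2) * ihu + T 2 * ihMu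

/-- The sign `(-1)^(ρ v + ρ u)` stands for `(-1)^{ρ(u,v)}`; avoiding truncated subtraction, the
identity holds for all `u, v`. -/
theorem bar_duality [OrderBot P] (hρ : ∀ a b : P, a ⋖ b → ρ b = ρ a + 1)
    (hS : IsPirconSystem S) (hxz : (x = X ∧ z = -1) ∨ (x = -1 ∧ z = X))
    (hRx : IsKLRFamily S x Rx) (hRz : IsKLRFamily S z Rz) (u v : P) :
    T (2 * ((ρ v : ℤ) - ρ u)) * invert (evq (Rx u v)) = (-1) ^ (ρ v + ρ u) * evq (Rz u v) := by
  by_cases hv : v = ⊥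
  · subst hv
    exact bar_duality_bot hRx hRz u
  obtain ⟨M, hM, hMv⟩ := hS.2 v hv
  exact bar_duality_step hρ hS.1 hxz hRx hRz hM hMv
    (fun u => bar_duality hρ hS hxz hRx hRz u (M v)) u
termination_by ρ v
decreasing_by have := hρ _ _ hMv; omega

theorem iotaAct_coeff_eq [OrderBot P] (hP : IsPircon P) (hρ : ∀ a b : P, a ⋖ b → ρ b = ρ a + 1)
    (hS : IsPirconSystem S) (hxz : (x = X ∧ z = -1) ∨ (x = -1 ∧ z = X))
    (hRx : IsKLRFamily S x Rx) (hRz : IsKLRFamily S z Rz) (u v : P) :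
    T (-2 * (ρ v : ℤ)) * ((-1) ^ (ρ v - ρ u) * evq (Rx u v)) =
      T (-2 * (ρ u : ℤ)) * invert (evq (Rz u v)) := by
  by_cases huv : u ≤ v
  swap
  · simp [hRx.1 _ _ huv, hRz.1 _ _ huv]
  obtain ⟨d, hd⟩ := Nat.exists_eq_add_of_le (hP.rank_mono hρ huv)
  have h := congrArg invert (bar_duality hρ hS hxz hRx hRz u v)
  rw [hd, show ρ u + d + ρ u = 2 * ρ u + d by ring, pow_add, pow_mul, neg_one_sq, one_pow,
    one_mul, map_mul, map_mul, invert_T, involutive_invert, map_pow, map_neg, map_one,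
    show -(2 * ((ρ u + d : ℕ) - (ρ u : ℤ))) = -2 * (d : ℤ) by push_cast; ring] at h
  have hsq : ((-1 : LaurentPolynomial ℤ) ^ d) ^ 2 = 1 := by
    rw [← pow_mul, pow_mul', neg_one_sq, one_pow]
  rw [hd, Nat.add_sub_cancel_left, show -2 * ((ρ u + d : ℕ) : ℤ) = -2 * ρ u + -2 * d by
    push_cast; ring, T_add]
  linear_combination T (-2 * (ρ u : ℤ)) * (-1) ^ d * h +
    T (-2 * (ρ u : ℤ)) * invert (evq (Rz u v)) * hsq

end Duality

section KLSEquation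

variable {P : Type*} {ρ : P → ℕ} {R : P → P → ℤ[X]} {w : P}

def SolvesKLSEquation (ρ : P → ℕ) (R : P → P → ℤ[X]) (w : P) (F : P → ℤ[X]) : Prop :=
  ∀ u, ∑ᶠ v, evq (R u v) * evq (F v) = T (2 * ((ρ w : ℤ) - ρ u)) * invert (evq (F u))

lemma SolvesKLSEquation.sub {F G : P → ℤ[X]} (hF : SolvesKLSEquation ρ R w F)
    (hG : SolvesKLSEquation ρ R w G) (hFfin : (support F).Finite) (hGfin : (support G).Finite) :
    SolvesKLSEquation ρ R w (F - G) := by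
  intro u
  simp only [Pi.sub_apply, evq_sub, map_sub]
  rw [mul_sub, ← hF u, ← hG u, ← finsum_sub_distrib
    (hFfin.subset (support_evq_mul_evq_subset (R u) F))
    (hGfin.subset (support_evq_mul_evq_subset (R u) G))]
  exact finsum_congr fun v => mul_sub _ _ _

variable [PartialOrder P]

lemma IsKLSFamily.solvesKLSEquation {Pp : P → P → ℤ[X]} (hPp : IsKLSFamily ρ R Pp)
    (hR : ∀ u v, ¬ u ≤ v → R u v = 0) : SolvesKLSEquation ρ R w (fun v => Pp v w) := by
  intro u
  beta_reduce
  have hsupp : ∀ v ∈ support (fun v => evq (R u v) * evq (Pp v w)), v ∈ Set.Icc u w := by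
    intro v hv
    refine ⟨by_contra fun h => hv ?_, by_contra fun h => hv ?_⟩ <;> simp [hR _ _ h, hPp.1 _ _ h]
  by_cases huw : u ≤ w
  · rw [hPp.2.2.2 u w huw, ← finsum_mem_univ]
    exact finsum_mem_inter_support_eq' _ _ _ fun v hv => by simp [hsupp v hv]
  · rw [hPp.1 u w huw, ← finsum_mem_univ, finsum_mem_inter_support_eq' _ _ (Set.Icc u w)
      fun v hv => by simp [hsupp v hv], Set.Icc_eq_empty huw]
    simp

lemma IsKLSFamily.degLtHalf {Pp : P → P → ℤ[X]} (hPp : IsKLSFamily ρ R Pp) {u : P}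
    (hu : u ≠ w) : DegLtHalf (Pp u w) ((ρ w : ℤ) - ρ u) := by
  by_cases huw : u ≤ w
  · exact hPp.2.2.1 u w (huw.lt_of_ne hu)
  · exact Or.inl (hPp.1 u w huw)

/-- At a maximal `u` of the support of `F` the sum collapses to `F_u`, so
`F_u(q) = q^{ρ(u,w)}·F_u(q⁻¹)`. -/
lemma SolvesKLSEquation.eq_zero {F : P → ℤ[X]} (hF : SolvesKLSEquation ρ R w F)
    (hfin : (support F).Finite) (hR1 : ∀ u, R u u = 1) (hR0 : ∀ u v, ¬ u ≤ v → R u v = 0)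
    (hdeg : ∀ v, DegLtHalf (F v) ((ρ w : ℤ) - ρ v)) : F = 0 := by
  by_contra hne
  obtain ⟨u, hu⟩ := hfin.exists_maximal (support_nonempty_iff.mpr hne)
  have hsum : ∑ᶠ v, evq (R u v) * evq (F v) = evq (F u) := by
    rw [finsum_eq_single _ u fun v hvu => ?_, hR1, evq_one, one_mul]
    by_cases huv : u ≤ v
    · rw [notMem_support.mp fun hv => hvu (le_antisymm (hu.2 hv huv) huv), evq_zero, mul_zero]
    · rw [hR0 u v huv, evq_zero, zero_mul]
  exact hu.1 ((hdeg u).eq_zero_of_evq_eq (hsum.symm.trans (hF u)))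

lemma solvesKLSEquation_of_iotaAct_eq {Rx Rz : P → P → ℤ[X]} {Q : P → ℤ[X]}
    (hcoeff : ∀ u v, T (-2 * (ρ v : ℤ)) * ((-1) ^ (ρ v - ρ u) * evq (Rx u v)) =
      T (-2 * (ρ u : ℤ)) * invert (evq (Rz u v)))
    (hQfin : (support Q).Finite)
    (hiota : iotaAct ρ Rx (fun v => T (-(ρ w : ℤ)) * evq (Q v)) =
      fun v => T (-(ρ w : ℤ)) * evq (Q v)) :
    SolvesKLSEquation ρ Rz w Q := by
  intro u
  have hfin := hQfin.subset (support_evq_mul_evq_subset (Rz u) Q)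
  have hu := congrFun hiota u
  simp only [iotaAct, hcoeff] at hu
  have hinv : T ((ρ w : ℤ) - 2 * ρ u) * invert (∑ᶠ v, evq (Rz u v) * evq (Q v)) =
      T (-(ρ w : ℤ)) * evq (Q u) := by
    rw [map_finsum invert hfin, mul_finsum' _ _ (hfin.subset fun v hv h => hv (by
      simp only at h; simp [h])), ← hu]
    refine finsum_congr fun v => ?_
    rw [map_mul, map_mul, invert_T, neg_neg, sub_eq_add_neg, ← neg_mul, T_add]
    ring
  calc ∑ᶠ v, evq (Rz u v) * evq (Q v)
      = T ((ρ w : ℤ) - 2 * ρ u) *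
          invert (T ((ρ w : ℤ) - 2 * ρ u) * invert (∑ᶠ v, evq (Rz u v) * evq (Q v))) := by
        rw [map_mul, invert_T, involutive_invert, ← mul_assoc, ← T_add, add_neg_cancel, T_zero,
          one_mul]
    _ = T (2 * ((ρ w : ℤ) - ρ u)) * invert (evq (Q u)) := by
        rw [hinv, map_mul, invert_T, ← mul_assoc, ← T_add]
        congr 2
        ring

end KLSEquation

theorem Cel'_characterization_general {P : Type*} [PartialOrder P] [OrderBot P]
    (ρ : P → ℕ) (hρcov : ∀ a b : P, a ⋖ b → ρ b = ρ a + 1)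
    (hP : IsPircon P) {S : Set (P → P)} (hS : IsPirconSystem S)
    {x z : Polynomial ℤ} (hxz : (x = X ∧ z = -1) ∨ (x = -1 ∧ z = X))
    {Rx Rz : P → P → Polynomial ℤ}
    (hRx : IsKLRFamily S x Rx) (hRz : IsKLRFamily S z Rz)
    {Pz : P → P → Polynomial ℤ} (hPz : IsKLSFamily ρ Rz Pz)
    (w : P) (D : P → LaurentPolynomial ℤ) (Q : P → Polynomial ℤ)
    (hQfin : (Function.support Q).Finite)
    (hD : D = fun v => T (-(ρ w : ℤ)) * evq (Q v))
    (hiota : iotaAct ρ Rx D = D)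
    (hQw : Q w = 1)
    (hdeg : ∀ v : P, v ≠ w → DegLtHalf (Q v) ((ρ w : ℤ) - (ρ v : ℤ))) :
    ∀ v : P, Q v = Pz v w := by
  subst hD
  have hQ : SolvesKLSEquation ρ Rz w Q :=
    solvesKLSEquation_of_iotaAct_eq (iotaAct_coeff_eq hP hρcov hS hxz hRx hRz) hQfin hiota
  have hPfin : (support fun v => Pz v w).Finite :=
    (hP.finite_Iic w).subset fun v hv => by_contra fun h => hv (hPz.1 v w h)
  have hdiff : ∀ v, DegLtHalf ((Q - fun v => Pz v w) v) ((ρ w : ℤ) - ρ v) := by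
    intro v
    by_cases hv : v = w
    · subst hv
      exact Or.inl (by simp [hQw, hPz.2.1])
    · exact (hdeg v hv).sub (hPz.degLtHalf hv)
  have hzero := (hQ.sub (hPz.solvesKLSEquation hRz.1) hQfin hPfin).eq_zero
    ((hQfin.union hPfin).subset (support_sub _ _)) hRz.2.1 hRz.1 hdiff
  exact fun v => sub_eq_zero.mp (congrFun hzero v)

/-- Characterization of the Kazhdan--Lusztig basis elements: if `D ∈ 𝓜_P` is
`ι^x`-invariant and `D = q^{-ρ(w)/2}·Σ_v Q_{v,w}·m_v` with `Q_{v,w} ∈ ℤ[q]` finitely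
supported, `Q_{w,w} = 1` and `deg Q_{v,w} < ρ(v,w)/2` for `v ≠ w`, then
`Q_{v,w} = P^z_{v,w}` for every `v`, i.e. `D = C'^x_w`. -/
theorem Cel'_characterization {P : Type*} [PartialOrder P] [OrderBot P]
    (ρ : P → ℕ) (hρ0 : ρ (⊥ : P) = 0) (hρcov : ∀ a b : P, a ⋖ b → ρ b = ρ a + 1)
    (hP : IsPircon P) {S : Set (P → P)} (hS : IsPirconSystem S)
    {x z : Polynomial ℤ} (hxz : (x = X ∧ z = -1) ∨ (x = -1 ∧ z = X))
    {Rx Rz : P → P → Polynomial ℤ}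
    (hRx : IsKLRFamily S x Rx) (hRz : IsKLRFamily S z Rz)
    (hudx : UpDownSymmetry S x Rx) (hudz : UpDownSymmetry S z Rz)
    {Pz : P → P → Polynomial ℤ} (hPz : IsKLSFamily ρ Rz Pz)
    (w : P) (D : P → LaurentPolynomial ℤ) (Q : P → Polynomial ℤ)
    (hQfin : (Function.support Q).Finite)
    (hD : D = fun v => T (-(ρ w : ℤ)) * evq (Q v))
    (hiota : iotaAct ρ Rx D = D)
    (hQw : Q w = 1)
    (hdeg : ∀ v : P, v ≠ w → DegLtHalf (Q v) ((ρ w : ℤ) - (ρ v : ℤ))) :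
    ∀ v : P, Q v = Pz v w :=
  Cel'_characterization_general ρ hρcov hP hS hxz hRx hRz hPz w D Q hQfin hD hiota hQw hdeg
end
end
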